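/- (Proposition 1, SVID versus SVD.) Let W ∈ ℝ^{m×n} be a real matrix, let sign(W) be its entrywise sign matrix (entries 1 where W_{ij} ≥ 0 and -1 where W_{ij} < 0), and let |W| be its entrywise absolute value matrix. Suppose a ∈ ℝ^m, b ∈ ℝⁿ are such that a bᵀ is a best rank-at-most-1 Frobenius approximation of W (i.e. ‖W - a bᵀ‖_F ≤ ‖W - B‖_F for all B of rank at most 1), and ã ∈ ℝ^m, b̃ ∈ ℝⁿ are such that ã b̃ᵀ is a best rank-at-most-1 Frobenius approximation of |W|. Then ‖W - sign(W) ⊙ (ã b̃ᵀ)‖_F² ≤ ‖W - a bᵀ‖_F². -/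

import Mathlib

/-!
Multiplying entry `(i, j)` by the sign of `W i j` turns the SVID error of `W` into the rank-one
error of `|W|` at `ã b̃ᵀ`. That is at most the error of `|W|` at the rank-one matrix
`|a| |b|ᵀ = |a bᵀ|`, which by the reverse triangle inequality `||w| - |x|| ≤ |w - x|`, applied
entrywise, is at most the SVD error of `W` at `a bᵀ`.
-/

open Matrix

/-- The entrywise sign matrix of `W`: entries `1` where `W i j ≥ 0`, `-1` where `W i j < 0`. -/
noncomputable def signM {m n : ℕ} (W : Matrix (Fin m) (Fin n) ℝ) :
    Matrix (Fin m) (Fin n) ℝ :=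
  Matrix.of fun i j => if W i j ≥ 0 then (1 : ℝ) else -1

/-- The entrywise absolute value matrix of `W`. -/
noncomputable def absM {m n : ℕ} (W : Matrix (Fin m) (Fin n) ℝ) :
    Matrix (Fin m) (Fin n) ℝ :=
  Matrix.of fun i j => |W i j|

/-- The Frobenius norm `‖M‖_F = (Σ_{i,j} M_{ij}²)^{1/2}`. -/
noncomputable def frobNorm {m n : ℕ} (M : Matrix (Fin m) (Fin n) ℝ) : ℝ :=
  Real.sqrt (∑ i, ∑ j, (M i j) ^ 2)

section

variable {m n : ℕ}

theorem frobNorm_nonneg (M : Matrix (Fin m) (Fin n) ℝ) : 0 ≤ frobNorm M :=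
  Real.sqrt_nonneg _

theorem frobNorm_le_frobNorm_of_sq_le {M N : Matrix (Fin m) (Fin n) ℝ}
    (h : ∀ i j, M i j ^ 2 ≤ N i j ^ 2) : frobNorm M ≤ frobNorm N :=
  Real.sqrt_le_sqrt <| Finset.sum_le_sum fun i _ => Finset.sum_le_sum fun j _ => h i j

theorem frobNorm_sub_hadamard_signM (W B : Matrix (Fin m) (Fin n) ℝ) :
    frobNorm (W - hadamard (signM W) B) = frobNorm (absM W - B) := by
  have sq_sub_sign_mul (w x : ℝ) : (w - (if w ≥ 0 then 1 else -1) * x) ^ 2 = (|w| - x) ^ 2 := by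
    rcases le_or_gt 0 w with hw | hw
    · rw [if_pos hw, abs_of_nonneg hw, one_mul]
    · rw [if_neg hw.not_ge, abs_of_neg hw]
      ring
  simp only [frobNorm, Matrix.sub_apply, hadamard_apply, signM, absM, of_apply, sq_sub_sign_mul]

theorem frobNorm_absM_sub_absM_le (W B : Matrix (Fin m) (Fin n) ℝ) :
    frobNorm (absM W - absM B) ≤ frobNorm (W - B) :=
  frobNorm_le_frobNorm_of_sq_le fun i j => by
    simpa [absM] using sq_le_sq.mpr (abs_abs_sub_abs_le_abs_sub (W i j) (B i j))

theorem absM_vecMulVec (a : Fin m → ℝ) (b : Fin n → ℝ) :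
    absM (vecMulVec a b) = vecMulVec |a| |b| := by
  ext i j
  simp [absM, vecMulVec_apply, abs_mul]

end

theorem svid_error_le_svd_error_general {m n : ℕ} (W : Matrix (Fin m) (Fin n) ℝ)
    (a : Fin m → ℝ) (b : Fin n → ℝ) (a' : Fin m → ℝ) (b' : Fin n → ℝ)
    (hab' : ∀ B : Matrix (Fin m) (Fin n) ℝ, B.rank ≤ 1 →
      frobNorm (absM W - Matrix.vecMulVec a' b') ≤ frobNorm (absM W - B)) :
    frobNorm (W - Matrix.hadamard (signM W) (Matrix.vecMulVec a' b')) ^ 2 ≤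
      frobNorm (W - Matrix.vecMulVec a b) ^ 2 := by
  refine pow_le_pow_left₀ (frobNorm_nonneg _) ?_ 2
  calc frobNorm (W - hadamard (signM W) (vecMulVec a' b'))
      = frobNorm (absM W - vecMulVec a' b') := frobNorm_sub_hadamard_signM W _
    _ ≤ frobNorm (absM W - absM (vecMulVec a b)) := by
      rw [absM_vecMulVec]
      exact hab' _ (rank_vecMulVec_le _ _)
    _ ≤ frobNorm (W - vecMulVec a b) := frobNorm_absM_sub_absM_le W _

/-- Proposition 1 (SVID versus SVD): if `a bᵀ` is a best rank ≤ 1 Frobenius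
approximation of `W` and `ã b̃ᵀ` is a best rank ≤ 1 Frobenius approximation of `|W|`,
then `‖W - sign(W) ⊙ (ã b̃ᵀ)‖_F² ≤ ‖W - a bᵀ‖_F²`. -/
theorem svid_error_le_svd_error {m n : ℕ} (W : Matrix (Fin m) (Fin n) ℝ)
    (a : Fin m → ℝ) (b : Fin n → ℝ) (a' : Fin m → ℝ) (b' : Fin n → ℝ)
    (hab : ∀ B : Matrix (Fin m) (Fin n) ℝ, B.rank ≤ 1 →
      frobNorm (W - Matrix.vecMulVec a b) ≤ frobNorm (W - B))
    (hab' : ∀ B : Matrix (Fin m) (Fin n) ℝ, B.rank ≤ 1 →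
      frobNorm (absM W - Matrix.vecMulVec a' b') ≤ frobNorm (absM W - B)) :
    frobNorm (W - Matrix.hadamard (signM W) (Matrix.vecMulVec a' b')) ^ 2 ≤
      frobNorm (W - Matrix.vecMulVec a b) ^ 2 :=
  svid_error_le_svd_error_general W a b a' b' hab'
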